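/- Let f = (f_1,…,f_n) be polynomials in R[x] with each deg f_i ≥ 1, δ_f = Σ_{i=1}^n (deg f_i − 1), and F ∈ R[x] with deg F ≤ d. Fix a difference derivative ∇F of F all of whose components have total degree ≤ d − 1, and let ∇'f_i and ∇''f_i be two systems of monotonous difference derivatives of the f_i. Let R'(x,y) and R''(x,y) be the determinants det‖∇'f ∇F; f(x) F(x)‖ and det‖∇''f ∇F; f(x) F(x)‖. Then there exist polynomials ω^{ij}(x,y) for 1 ≤ i < j ≤ n with deg f_i + deg f_j + deg ω^{ij} ≤ δ_f + d, and polynomials Ω^i(x,y) for 1 ≤ i ≤ n with deg f_i + deg Ω^i ≤ δ_f, such that R'(x,y) − R''(x,y) = Σ_{i<j} (f_i(x)·f_j(y) − f_i(y)·f_j(x))·ω^{ij}(x,y) + Σ_i (f_i(x)·F(y) − f_i(y)·F(x))·Ω^i(x,y). -/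
import Mathlib


open MvPolynomial Finset

noncomputable section

variable {R : Type*} [CommRing R] {n : ℕ}

/-- Total degree of a multivariate polynomial, valued in `WithBot ℤ`,
with the convention `deg 0 = ⊥` (i.e. `-∞`). -/
def mdeg {σ S : Type*} [CommSemiring S] (F : MvPolynomial σ S) : WithBot ℤ :=
  F.support.sup fun m => ((m.sum fun _ e => e : ℕ) : ℤ)

/-- The embedding `R[x] → R[x,y]`, `x_i ↦ x_i` (the x-variables are `Sum.inl`,
the y-variables are `Sum.inr`). -/
def toX : MvPolynomial (Fin n) R →ₐ[R] MvPolynomial (Fin n ⊕ Fin n) R :=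
  rename Sum.inl

/-- The embedding `R[x] → R[x,y]`, `x_i ↦ y_i`. -/
def toY : MvPolynomial (Fin n) R →ₐ[R] MvPolynomial (Fin n ⊕ Fin n) R :=
  rename Sum.inr

/-- `D = (∇¹F, …, ∇ⁿF)` is a difference derivative of `F`:
`∑ k, (x_k - y_k) * ∇ᵏF(x,y) = F(x) - F(y)`. -/
def IsDiffDeriv (F : MvPolynomial (Fin n) R)
    (D : Fin n → MvPolynomial (Fin n ⊕ Fin n) R) : Prop :=
  ∑ k : Fin n, (X (Sum.inl k) - X (Sum.inr k)) * D k = toX F - toY F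

/-- A difference derivative of `F` is monotonous if each component has total degree
`≤ deg F - 1` (equivalently `deg (∇ᵏF) + 1 ≤ deg F` in `WithBot ℤ`). -/
def IsMonotonous (F : MvPolynomial (Fin n) R)
    (D : Fin n → MvPolynomial (Fin n ⊕ Fin n) R) : Prop :=
  ∀ k, mdeg (D k) + 1 ≤ mdeg F

/-- `δ_f = ∑ᵢ (deg fᵢ - 1)`. -/
def deltaF (f : Fin n → MvPolynomial (Fin n) R) : ℤ :=
  ∑ i, (((f i).totalDegree : ℤ) - 1)

/-- `(f)^{≤ d}_x`: sums `∑ fᵢ gᵢ` with `deg fᵢ + deg gᵢ ≤ d` for every `i`. -/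
def boundedSpan (f : Fin n → MvPolynomial (Fin n) R) (d : WithBot ℤ) :
    Set (MvPolynomial (Fin n) R) :=
  {F | ∃ g : Fin n → MvPolynomial (Fin n) R,
    F = ∑ i, f i * g i ∧ ∀ i, mdeg (f i) + mdeg (g i) ≤ d}

/-- A linear functional `L` annuls a set `S` if it vanishes on it. -/
def Annuls (L : MvPolynomial (Fin n) R →ₗ[R] R) (S : Set (MvPolynomial (Fin n) R)) : Prop :=
  ∀ F ∈ S, L F = 0

/-- `L(y_*).P` : apply the functional `L` to the `y`-part of `P ∈ R[x,y]`,
i.e. if `P = ∑_α A_α(x) y^α` then `L(y_*).P = ∑_α L(y^α) • A_α(x)`. -/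
def applyY (L : MvPolynomial (Fin n) R →ₗ[R] R) (P : MvPolynomial (Fin n ⊕ Fin n) R) :
    MvPolynomial (Fin n) R :=
  ∑ m ∈ P.support,
    C (L (monomial (Finsupp.sumFinsuppAddEquivProdFinsupp m).2 (1 : R)) * P.coeff m) *
      monomial (Finsupp.sumFinsuppAddEquivProdFinsupp m).1 (1 : R)

/-- `det‖∇f(x,y) ∇F(x,y); f(x) F(x)‖` : the `(n+1) × (n+1)` determinant whose entry `(k,i)`
is `∇ᵏfᵢ(x,y)` for `k, i ≤ n`, entry `(k, n+1)` is `∇ᵏF(x,y)`, entry `(n+1, i)` is `fᵢ(x)`,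
and entry `(n+1, n+1)` is `F(x)`.  Here `Df i` is the tuple `(∇¹fᵢ, …, ∇ⁿfᵢ)`. -/
def ddetX (f : Fin n → MvPolynomial (Fin n) R)
    (Df : Fin n → Fin n → MvPolynomial (Fin n ⊕ Fin n) R)
    (F : MvPolynomial (Fin n) R) (DF : Fin n → MvPolynomial (Fin n ⊕ Fin n) R) :
    MvPolynomial (Fin n ⊕ Fin n) R :=
  Matrix.det (Matrix.of fun k i : Fin (n + 1) =>
    if hk : (k : ℕ) < n then
      if hi : (i : ℕ) < n then Df ⟨i, hi⟩ ⟨k, hk⟩ else DF ⟨k, hk⟩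
    else
      if hi : (i : ℕ) < n then toX (f ⟨i, hi⟩) else toX F)

/-- `det‖∇f(x,y) ∇F(x,y); f(y) F(y)‖` : as `ddetX` but with last row `(f₁(y),…,fₙ(y),F(y))`. -/
def ddetY (f : Fin n → MvPolynomial (Fin n) R)
    (Df : Fin n → Fin n → MvPolynomial (Fin n ⊕ Fin n) R)
    (F : MvPolynomial (Fin n) R) (DF : Fin n → MvPolynomial (Fin n ⊕ Fin n) R) :
    MvPolynomial (Fin n ⊕ Fin n) R :=
  Matrix.det (Matrix.of fun k i : Fin (n + 1) =>
    if hk : (k : ℕ) < n then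
      if hi : (i : ℕ) < n then Df ⟨i, hi⟩ ⟨k, hk⟩ else DF ⟨k, hk⟩
    else
      if hi : (i : ℕ) < n then toY (f ⟨i, hi⟩) else toY F)

section MdegAux
variable {σ S : Type*} [CommSemiring S]

theorem mdeg_zero : mdeg (0 : MvPolynomial σ S) = ⊥ := by
  simp [mdeg]

theorem mdeg_le_iff {P : MvPolynomial σ S} {D : WithBot ℤ} :
    mdeg P ≤ D ↔ ∀ m ∈ P.support, (((m.sum fun _ e => e : ℕ) : ℤ) : WithBot ℤ) ≤ D :=
  Finset.sup_le_iff

theorem le_mdeg {P : MvPolynomial σ S} {m : σ →₀ ℕ} (hm : m ∈ P.support) :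
    (((m.sum fun _ e => e : ℕ) : ℤ) : WithBot ℤ) ≤ mdeg P :=
  Finset.le_sup (f := fun m => (((m.sum fun _ e => e : ℕ) : ℤ) : WithBot ℤ)) hm

theorem mdeg_eq_totalDegree {P : MvPolynomial σ S} (h : P ≠ 0) :
    mdeg P = ((P.totalDegree : ℤ) : WithBot ℤ) := by
  apply le_antisymm
  · rw [mdeg_le_iff]
    intro m hm
    have := MvPolynomial.le_totalDegree hm
    exact_mod_cast this
  · obtain ⟨m, hm, he⟩ := Finset.exists_mem_eq_sup P.support
      (MvPolynomial.support_nonempty.mpr h) (fun m => (m.sum fun _ e => e : ℕ))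
    rw [MvPolynomial.totalDegree, he]
    exact le_mdeg hm

theorem mdeg_support_mono {P Q : MvPolynomial σ S} (h : P.support ⊆ Q.support) :
    mdeg P ≤ mdeg Q := Finset.sup_mono h

theorem mdeg_add_le (P Q : MvPolynomial σ S) : mdeg (P + Q) ≤ max (mdeg P) (mdeg Q) := by
  classical
  rw [mdeg_le_iff]
  intro m hm
  rcases Finset.mem_union.mp (MvPolynomial.support_add hm) with h | h
  · exact le_max_of_le_left (le_mdeg h)
  · exact le_max_of_le_right (le_mdeg h)

theorem mdeg_mul_le (P Q : MvPolynomial σ S) : mdeg (P * Q) ≤ mdeg P + mdeg Q := by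
  by_cases hP : P = 0
  · simp [hP, mdeg_zero]
  by_cases hQ : Q = 0
  · simp [hQ, mdeg_zero]
  by_cases hPQ : P * Q = 0
  · simp [hPQ, mdeg_zero]
  rw [mdeg_eq_totalDegree hP, mdeg_eq_totalDegree hQ, mdeg_eq_totalDegree hPQ]
  have := MvPolynomial.totalDegree_mul P Q
  exact_mod_cast this

theorem mdeg_sum_le {ι : Type*} (s : Finset ι) (g : ι → MvPolynomial σ S) {D : WithBot ℤ}
    (h : ∀ i ∈ s, mdeg (g i) ≤ D) : mdeg (∑ i ∈ s, g i) ≤ D := by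
  classical
  induction s using Finset.induction_on with
  | empty => simp [mdeg_zero]
  | @insert a s ha ih =>
    rw [Finset.sum_insert ha]
    refine le_trans (mdeg_add_le _ _) (max_le (h a (Finset.mem_insert_self a s)) ?_)
    exact ih fun i hi => h i (Finset.mem_insert_of_mem hi)

theorem mdeg_neg {S : Type*} [CommRing S] (P : MvPolynomial σ S) : mdeg (-P) = mdeg P := by
  simp [mdeg, MvPolynomial.support_neg]

theorem mdeg_sub_le {S : Type*} [CommRing S] (P Q : MvPolynomial σ S) :
    mdeg (P - Q) ≤ max (mdeg P) (mdeg Q) := by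
  rw [sub_eq_add_neg]
  simpa [mdeg_neg] using mdeg_add_le P (-Q)

theorem mdeg_monomial_le (m : σ →₀ ℕ) (a : S) :
    mdeg (monomial m a) ≤ (((m.sum fun _ e => e : ℕ) : ℤ) : WithBot ℤ) := by
  classical
  rw [mdeg_le_iff]
  intro m' hm'
  rw [MvPolynomial.support_monomial] at hm'
  split at hm'
  · simp at hm'
  · simp only [Finset.mem_singleton] at hm'
    subst hm'; exact le_rfl

theorem mdeg_C_le (r : S) : mdeg (C r : MvPolynomial σ S) ≤ 0 := by
  simpa using mdeg_monomial_le (0 : σ →₀ ℕ) r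

theorem mdeg_one_le : mdeg (1 : MvPolynomial σ S) ≤ 0 := by
  simpa using mdeg_C_le (1 : S)

theorem mdeg_X_le (s : σ) : mdeg (X s : MvPolynomial σ S) ≤ 1 := by
  have := mdeg_monomial_le (Finsupp.single s 1) (1 : S)
  rw [MvPolynomial.X]
  simpa using this

end MdegAux

section WbAux

theorem wb_coe_sum {ι : Type*} (s : Finset ι) (f : ι → ℤ) :
    ((∑ i ∈ s, f i : ℤ) : WithBot ℤ) = ∑ i ∈ s, ((f i : ℤ) : WithBot ℤ) := by
  classical
  induction s using Finset.induction_on with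
  | empty => simp
  | @insert a s ha ih => rw [Finset.sum_insert ha, Finset.sum_insert ha, WithBot.coe_add, ih]

theorem wb_add_one_le {a : WithBot ℤ} {k : ℤ} :
    a + 1 ≤ (k : WithBot ℤ) ↔ a ≤ ((k - 1 : ℤ) : WithBot ℤ) := by
  induction a using WithBot.recBotCoe with
  | bot => simp
  | coe a =>
    have h1 : ((a : WithBot ℤ) + 1) = ((a + 1 : ℤ) : WithBot ℤ) := by push_cast; ring
    rw [h1, WithBot.coe_le_coe, WithBot.coe_le_coe]
    omega

end WbAux
section DivAux
variable {σ : Type*} {S : Type*} [CommSemiring S] [DecidableEq σ]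

def qdiv (v : σ) (p : MvPolynomial σ S) : MvPolynomial σ S :=
  ∑ m ∈ p.support.filter (fun m => m v ≠ 0), monomial (m - Finsupp.single v 1) (coeff m p)

def rdiv (v : σ) (p : MvPolynomial σ S) : MvPolynomial σ S :=
  ∑ m ∈ p.support.filter (fun m => m v = 0), monomial m (coeff m p)

theorem single_add_sub_cancel {m : σ →₀ ℕ} {v : σ} (h : m v ≠ 0) :
    Finsupp.single v 1 + (m - Finsupp.single v 1) = m := by
  ext w
  simp only [Finsupp.add_apply, Finsupp.tsub_apply, Finsupp.single_apply]
  by_cases hw : v = w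
  · simp only [if_pos hw]
    subst hw; omega
  · simp [hw]

theorem qdiv_add_rdiv (v : σ) (p : MvPolynomial σ S) :
    X v * qdiv v p + rdiv v p = p := by
  rw [qdiv, Finset.mul_sum]
  have h1 : ∀ m ∈ p.support.filter (fun m => m v ≠ 0),
      X v * monomial (m - Finsupp.single v 1) (coeff m p) = monomial m (coeff m p) := by
    intro m hm
    rw [Finset.mem_filter] at hm
    rw [MvPolynomial.X, MvPolynomial.monomial_mul, one_mul, single_add_sub_cancel hm.2]
  have h2 : p.support.filter (fun m => m v = 0) = p.support.filter (fun m => ¬ m v ≠ 0) := by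
    simp
  rw [Finset.sum_congr rfl h1, rdiv, h2, Finset.sum_filter_add_sum_filter_not,
    MvPolynomial.support_sum_monomial_coeff]

theorem coeff_sum_monomial_mem {s : Finset (σ →₀ ℕ)} {c : (σ →₀ ℕ) → S} (m : σ →₀ ℕ) :
    coeff m (∑ m' ∈ s, monomial m' (c m')) = if m ∈ s then c m else 0 := by
  rw [MvPolynomial.coeff_sum]
  simp only [MvPolynomial.coeff_monomial]
  rw [Finset.sum_ite_eq' s m c]

theorem coeff_rdiv (v : σ) (p : MvPolynomial σ S) (m : σ →₀ ℕ) :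
    coeff m (rdiv v p) = if m v = 0 then coeff m p else 0 := by
  rw [rdiv, coeff_sum_monomial_mem]
  by_cases h : m v = 0
  · simp only [h, if_true]
    by_cases hm : m ∈ p.support
    · rw [if_pos (Finset.mem_filter.mpr ⟨hm, h⟩)]
    · have h3 : m ∉ p.support.filter (fun m => m v = 0) :=
        fun hc => hm (Finset.mem_filter.mp hc).1
      rw [if_neg h3]
      rw [MvPolynomial.notMem_support_iff] at hm
      exact hm.symm
  · have h3 : m ∉ p.support.filter (fun m => m v = 0) :=
      fun hc => h (Finset.mem_filter.mp hc).2
    rw [if_neg h, if_neg h3]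

theorem support_rdiv (v : σ) (p : MvPolynomial σ S) : (rdiv v p).support ⊆ p.support := by
  intro m hm
  rw [MvPolynomial.mem_support_iff, coeff_rdiv] at hm
  rw [MvPolynomial.mem_support_iff]
  intro hc
  apply hm
  split <;> simp [hc]

theorem mdeg_rdiv_le (v : σ) (p : MvPolynomial σ S) : mdeg (rdiv v p) ≤ mdeg p :=
  mdeg_support_mono (support_rdiv v p)

theorem deg_sub_single {m : σ →₀ ℕ} {v : σ} (h : m v ≠ 0) :
    ((m - Finsupp.single v 1).sum fun _ e => e) + 1 = m.sum fun _ e => e := by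
  conv_rhs => rw [← single_add_sub_cancel h]
  rw [Finsupp.sum_add_index' (fun _ => rfl) (fun _ _ _ => rfl)]
  rw [Finsupp.sum_single_index rfl]
  omega

theorem mdeg_qdiv {v : σ} {p : MvPolynomial σ S} {D : ℤ} (h : mdeg p ≤ (D : WithBot ℤ)) :
    mdeg (qdiv v p) ≤ ((D - 1 : ℤ) : WithBot ℤ) := by
  rw [qdiv]
  apply mdeg_sum_le
  intro m hm
  rw [Finset.mem_filter] at hm
  refine le_trans (mdeg_monomial_le _ _) ?_
  have hdeg : (((m.sum fun _ e => e : ℕ) : ℤ) : WithBot ℤ) ≤ (D : WithBot ℤ) :=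
    le_trans (le_mdeg hm.1) h
  rw [WithBot.coe_le_coe] at hdeg ⊢
  have := deg_sub_single hm.2
  omega

end DivAux
section KoszulVar

theorem eq_zero_of_X_mul_eq_zero {σ S : Type*} [CommRing S] {v : σ} {G : MvPolynomial σ S}
    (h : X v * G = 0) : G = 0 := by
  ext m
  have := congrArg (coeff (Finsupp.single v 1 + m)) h
  rwa [MvPolynomial.coeff_X_mul, MvPolynomial.coeff_zero] at this

theorem koszul_var {R : Type*} [CommRing R] {n : ℕ} (t : Finset (Fin n)) :
    ∀ (E : Fin n → MvPolynomial (Fin n ⊕ Fin n) R),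
    (∑ k ∈ t, X (Sum.inl k) * E k = 0) →
    ∃ c : Fin n → Fin n → MvPolynomial (Fin n ⊕ Fin n) R,
      (∀ r l, c l r = -c r l) ∧ (∀ r, c r r = 0) ∧
      (∀ k ∈ t, E k = ∑ l ∈ t, X (Sum.inl l) * c k l) ∧
      (∀ D : ℤ, (∀ m ∈ t, mdeg (E m) ≤ (D : WithBot ℤ)) →
        ∀ r l, mdeg (c r l) ≤ ((D - 1 : ℤ) : WithBot ℤ)) := by
  classical
  induction t using Finset.induction_on with
  | empty =>
    intro E _
    exact ⟨0, by simp, by simp, by simp, by simp [mdeg_zero]⟩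
  | @insert a t ha ih =>
    intro E h
    rw [Finset.sum_insert ha] at h
    set v : Fin n ⊕ Fin n := Sum.inl a with hv
    set Q : Fin n → MvPolynomial (Fin n ⊕ Fin n) R := fun k => qdiv v (E k) with hQ
    set Rd : Fin n → MvPolynomial (Fin n ⊕ Fin n) R := fun k => rdiv v (E k) with hRd
    have hsplit : X v * (E a + ∑ k ∈ t, X (Sum.inl k) * Q k)
        + ∑ k ∈ t, X (Sum.inl k) * Rd k = 0 := by
      have hterm : ∀ k ∈ t, X v * (X (Sum.inl k) * Q k) + X (Sum.inl k) * Rd k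
          = X (Sum.inl k) * E k := by
        intro k _
        conv_rhs => rw [← qdiv_add_rdiv v (E k)]
        ring
      rw [mul_add, Finset.mul_sum, ← h]
      rw [← Finset.sum_congr rfl hterm, Finset.sum_add_distrib]
      ring
    have hRdfree : ∀ k, ∀ m : (Fin n ⊕ Fin n) →₀ ℕ, m v ≠ 0 → coeff m (Rd k) = 0 := by
      intro k m hm
      rw [hRd]
      rw [coeff_rdiv, if_neg hm]
    have hP2coeff : ∀ m : (Fin n ⊕ Fin n) →₀ ℕ, m v ≠ 0 →
        coeff m (∑ k ∈ t, X (Sum.inl k) * Rd k) = 0 := by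
      intro m hm
      rw [MvPolynomial.coeff_sum]
      apply Finset.sum_eq_zero
      intro k hk
      have hka : k ≠ a := fun hc => ha (hc ▸ hk)
      have hkv : (Sum.inl k : Fin n ⊕ Fin n) ≠ v := by simpa [hv] using hka
      rw [MvPolynomial.coeff_X_mul']
      split
      · apply hRdfree
        rw [Finsupp.tsub_apply, Finsupp.single_apply, if_neg hkv]
        simpa using hm
      · rfl
    have hP2 : (∑ k ∈ t, X (Sum.inl k) * Rd k) = 0 := by
      ext m
      rw [MvPolynomial.coeff_zero]
      by_cases hm : m v = 0
      · have h2 := congrArg (coeff m) hsplit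
        rw [MvPolynomial.coeff_add, MvPolynomial.coeff_X_mul'] at h2
        rw [if_neg (by simpa [Finsupp.mem_support_iff] using hm)] at h2
        simpa using h2
      · exact hP2coeff m hm
    have hG : E a + ∑ k ∈ t, X (Sum.inl k) * Q k = 0 := by
      apply eq_zero_of_X_mul_eq_zero (v := v)
      rw [hP2, add_zero] at hsplit
      exact hsplit
    obtain ⟨c', hanti', hdiag', hrep', hdeg'⟩ := ih Rd hP2
    set cnew : Fin n → Fin n → MvPolynomial (Fin n ⊕ Fin n) R := fun r l =>
      if r = a then (if l ∈ t then -(Q l) else 0)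
      else if l = a then (if r ∈ t then Q r else 0) else c' r l with hcnew
    have cnew_aa : cnew a a = 0 := by simp [hcnew, ha]
    have cnew_al : ∀ l, cnew a l = if l ∈ t then -(Q l) else 0 := by
      intro l; simp [hcnew]
    have cnew_ra : ∀ r, r ≠ a → cnew r a = if r ∈ t then Q r else 0 := by
      intro r hr; simp [hcnew, hr]
    have cnew_rl : ∀ r l, r ≠ a → l ≠ a → cnew r l = c' r l := by
      intro r l hr hl; simp [hcnew, hr, hl]
    refine ⟨cnew, ?_, ?_, ?_, ?_⟩
    · intro r l
      rcases eq_or_ne r a with hr | hr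
      · rcases eq_or_ne l a with hl | hl
        · subst hr; subst hl; rw [cnew_aa]; simp
        · subst hr
          rw [cnew_ra l hl, cnew_al l]
          split <;> simp
      · rcases eq_or_ne l a with hl | hl
        · subst hl
          rw [cnew_al r, cnew_ra r hr]
          split <;> simp
        · rw [cnew_rl l r hl hr, cnew_rl r l hr hl, hanti' r l]
    · intro r
      rcases eq_or_ne r a with hr | hr
      · subst hr; exact cnew_aa
      · rw [cnew_rl r r hr hr]; exact hdiag' r
    · intro k hk
      rcases Finset.mem_insert.mp hk with hk | hk
      · subst hk
        rw [Finset.sum_insert ha, cnew_aa, mul_zero, zero_add]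
        have e2 : ∀ l ∈ t, X (Sum.inl l) * cnew k l = -(X (Sum.inl l) * Q l) := by
          intro l hl
          rw [cnew_al l, if_pos hl, mul_neg]
        rw [Finset.sum_congr rfl e2, Finset.sum_neg_distrib]
        linear_combination hG
      · have hka : k ≠ a := fun hc => ha (hc ▸ hk)
        rw [Finset.sum_insert ha, cnew_ra k hka, if_pos hk]
        have e2 : ∀ l ∈ t, X (Sum.inl l) * cnew k l = X (Sum.inl l) * c' k l := by
          intro l hl
          have hla : l ≠ a := fun hc => ha (hc ▸ hl)
          rw [cnew_rl k l hka hla]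
        rw [Finset.sum_congr rfl e2, ← hrep' k hk]
        conv_lhs => rw [← qdiv_add_rdiv v (E k)]
    · intro D hD r l
      have hDQ : ∀ k ∈ t, mdeg (Q k) ≤ ((D - 1 : ℤ) : WithBot ℤ) := by
        intro k hk
        exact mdeg_qdiv (hD k (Finset.mem_insert_of_mem hk))
      rcases eq_or_ne r a with hr | hr
      · subst hr
        rw [cnew_al l]
        split
        · rw [mdeg_neg]; exact hDQ l ‹_›
        · rw [mdeg_zero]; exact bot_le
      · rcases eq_or_ne l a with hl | hl
        · subst hl
          rw [cnew_ra r hr]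
          split
          · exact hDQ r ‹_›
          · rw [mdeg_zero]; exact bot_le
        · rw [cnew_rl r l hr hl]
          apply hdeg' D
          intro m hm
          exact le_trans (mdeg_rdiv_le v (E m)) (hD m (Finset.mem_insert_of_mem hm))

end KoszulVar
section AevalDeg
variable {σ τ S : Type*} [CommSemiring S]

theorem mdeg_prod_le {ι : Type*} (s : Finset ι) (h : ι → MvPolynomial σ S)
    (D : ι → WithBot ℤ) (hb : ∀ i ∈ s, mdeg (h i) ≤ D i) :
    mdeg (∏ i ∈ s, h i) ≤ ∑ i ∈ s, D i := by
  classical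
  induction s using Finset.induction_on with
  | empty => simpa using mdeg_one_le
  | @insert a s ha ih =>
    rw [Finset.prod_insert ha, Finset.sum_insert ha]
    refine le_trans (mdeg_mul_le _ _) ?_
    exact add_le_add (hb a (Finset.mem_insert_self a s))
      (ih fun i hi => hb i (Finset.mem_insert_of_mem hi))

theorem mdeg_pow_le {Q : MvPolynomial σ S} (hQ : mdeg Q ≤ 1) (e : ℕ) :
    mdeg (Q ^ e) ≤ ((e : ℤ) : WithBot ℤ) := by
  induction e with
  | zero => simpa using mdeg_one_le
  | succ e ih =>
    rw [pow_succ]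
    refine le_trans (mdeg_mul_le _ _) (le_trans (add_le_add ih hQ) ?_)
    have : ((1 : ℤ) : WithBot ℤ) = (1 : WithBot ℤ) := rfl
    rw [← this, ← WithBot.coe_add, WithBot.coe_le_coe]
    push_cast
    omega

theorem mdeg_aeval_le {S : Type*} [CommRing S] (g : σ → MvPolynomial τ S)
    (hg : ∀ s, mdeg (g s) ≤ 1) (P : MvPolynomial σ S) :
    mdeg (aeval g P) ≤ mdeg P := by
  conv_lhs => rw [← MvPolynomial.support_sum_monomial_coeff P]
  rw [map_sum]
  apply mdeg_sum_le
  intro m hm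
  rw [MvPolynomial.aeval_monomial]
  refine le_trans (mdeg_mul_le _ _) ?_
  have h1 : mdeg (algebraMap S (MvPolynomial τ S) (coeff m P)) ≤ 0 := by
    rw [MvPolynomial.algebraMap_eq]
    exact mdeg_C_le _
  have h2 : mdeg (∏ s ∈ m.support, g s ^ m s) ≤ (((m.sum fun _ e => e : ℕ) : ℤ) : WithBot ℤ) := by
    refine le_trans (mdeg_prod_le _ _ (fun s => ((m s : ℤ) : WithBot ℤ))
      (fun s _ => mdeg_pow_le (hg s) (m s))) ?_
    rw [← wb_coe_sum]
    rw [WithBot.coe_le_coe]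
    have : (m.sum fun _ e => e) = ∑ s ∈ m.support, m s := rfl
    rw [this]
    push_cast
    exact le_refl _
  refine le_trans (add_le_add h1 h2) ?_
  rw [zero_add]
  exact le_mdeg hm

end AevalDeg

section KoszulU

theorem koszul_u (E : Fin n → MvPolynomial (Fin n ⊕ Fin n) R)
    (h : ∑ k, (X (Sum.inl k) - X (Sum.inr k)) * E k = 0) :
    ∃ c : Fin n → Fin n → MvPolynomial (Fin n ⊕ Fin n) R,
      (∀ r l, c l r = -c r l) ∧ (∀ r, c r r = 0) ∧
      (∀ k, E k = ∑ l, (X (Sum.inl l) - X (Sum.inr l)) * c k l) ∧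
      (∀ D : ℤ, (∀ m, mdeg (E m) ≤ (D : WithBot ℤ)) →
        ∀ r l, mdeg (c r l) ≤ ((D - 1 : ℤ) : WithBot ℤ)) := by
  classical
  set g₁ : Fin n ⊕ Fin n → MvPolynomial (Fin n ⊕ Fin n) R :=
    Sum.elim (fun k => X (Sum.inl k) + X (Sum.inr k)) (fun k => X (Sum.inr k)) with hg₁def
  set g₂ : Fin n ⊕ Fin n → MvPolynomial (Fin n ⊕ Fin n) R :=
    Sum.elim (fun k => X (Sum.inl k) - X (Sum.inr k)) (fun k => X (Sum.inr k)) with hg₂def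
  set e₁ := aeval (R := R) g₁ with he₁def
  set e₂ := aeval (R := R) g₂ with he₂def
  have hcomp : ∀ p : MvPolynomial (Fin n ⊕ Fin n) R, e₂ (e₁ p) = p := by
    intro p
    have : (e₂.comp e₁ : MvPolynomial (Fin n ⊕ Fin n) R →ₐ[R] MvPolynomial (Fin n ⊕ Fin n) R)
        = AlgHom.id R _ := by
      apply MvPolynomial.algHom_ext
      rintro (k | k) <;> simp [he₁def, he₂def, hg₁def, hg₂def]
    calc e₂ (e₁ p) = (e₂.comp e₁) p := rfl
      _ = p := by rw [this]; rfl
  have he₁u : ∀ k, e₁ (X (Sum.inl k) - X (Sum.inr k)) = X (Sum.inl k) := by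
    intro k; simp [he₁def, hg₁def]
  have he₂v : ∀ l, e₂ (X (Sum.inl l)) = X (Sum.inl l) - X (Sum.inr l) := by
    intro l; simp [he₂def, hg₂def]
  have hg₁deg : ∀ s, mdeg (g₁ s) ≤ 1 := by
    rintro (k | k)
    · refine le_trans (mdeg_add_le _ _) (max_le (mdeg_X_le _) (mdeg_X_le _))
    · exact mdeg_X_le _
  have hg₂deg : ∀ s, mdeg (g₂ s) ≤ 1 := by
    rintro (k | k)
    · refine le_trans (mdeg_sub_le _ _) (max_le (mdeg_X_le _) (mdeg_X_le _))
    · exact mdeg_X_le _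
  have h1 : ∑ k, X (Sum.inl k) * e₁ (E k) = 0 := by
    have := congrArg e₁ h
    rw [map_sum, map_zero] at this
    rw [← this]
    apply Finset.sum_congr rfl
    intro k _
    rw [map_mul, he₁u]
  obtain ⟨c', hanti', hdiag', hrep', hdeg'⟩ := koszul_var Finset.univ (fun k => e₁ (E k))
    (by simpa using h1)
  refine ⟨fun r l => e₂ (c' r l), ?_, ?_, ?_, ?_⟩
  · intro r l; show e₂ (c' l r) = -(e₂ (c' r l)); rw [hanti' r l, map_neg]
  · intro r; show e₂ (c' r r) = 0; rw [hdiag' r, map_zero]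
  · intro k
    have := congrArg e₂ (hrep' k (Finset.mem_univ k))
    rw [hcomp] at this
    rw [this, map_sum]
    apply Finset.sum_congr rfl
    intro l _
    rw [map_mul, he₂v]
  · intro D hD r l
    refine le_trans (mdeg_aeval_le g₂ hg₂deg _) ?_
    apply hdeg' D
    intro m _
    exact le_trans (mdeg_aeval_le g₁ hg₁deg _) (hD m)

end KoszulU
section DetUtil
variable {S : Type*} [CommRing S] {N : ℕ}

theorem updateRow_comm' {m' n' α : Type*} [DecidableEq m'] (M : Matrix m' n' α)
    {i j : m'} (hij : i ≠ j) (v w : n' → α) :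
    (M.updateRow i v).updateRow j w = (M.updateRow j w).updateRow i v := by
  ext r c
  rcases eq_or_ne r j with rfl | hrj
  · rw [Matrix.updateRow_self, Matrix.updateRow_ne hij.symm, Matrix.updateRow_self]
  · rw [Matrix.updateRow_ne hrj]
    rcases eq_or_ne r i with rfl | hri
    · rw [Matrix.updateRow_self, Matrix.updateRow_self]
    · rw [Matrix.updateRow_ne hri, Matrix.updateRow_ne hri, Matrix.updateRow_ne hrj]

theorem det_updateRow_sum' {ι : Type*} (M : Matrix (Fin N) (Fin N) S) (i : Fin N)
    (s : Finset ι) (v : ι → Fin N → S) :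
    (M.updateRow i (∑ k ∈ s, v k)).det = ∑ k ∈ s, (M.updateRow i (v k)).det := by
  classical
  induction s using Finset.induction_on with
  | empty =>
    rw [Finset.sum_empty, Finset.sum_empty]
    apply Matrix.det_eq_zero_of_row_eq_zero i
    intro j
    rw [Matrix.updateRow_self]
    rfl
  | @insert a s ha ih =>
    rw [Finset.sum_insert ha, Finset.sum_insert ha, Matrix.det_updateRow_add, ih]

theorem det_updateCol_sum' {ι : Type*} (M : Matrix (Fin N) (Fin N) S) (i : Fin N)
    (s : Finset ι) (v : ι → Fin N → S) :
    (M.updateCol i (∑ k ∈ s, v k)).det = ∑ k ∈ s, (M.updateCol i (v k)).det := by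
  classical
  induction s using Finset.induction_on with
  | empty =>
    rw [Finset.sum_empty, Finset.sum_empty]
    apply Matrix.det_eq_zero_of_column_eq_zero i
    intro j
    rw [Matrix.updateCol_self]
    rfl
  | @insert a s ha ih =>
    rw [Finset.sum_insert ha, Finset.sum_insert ha, Matrix.det_updateCol_add, ih]

theorem det_updateRow_updateRow_swap (M : Matrix (Fin N) (Fin N) S) {i j : Fin N}
    (hij : i ≠ j) (p q : Fin N → S) :
    ((M.updateRow i p).updateRow j q).det = -((M.updateRow i q).updateRow j p).det := by
  have hpq : ((M.updateRow i (p + q)).updateRow j (p + q)).det = 0 := by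
    apply Matrix.det_zero_of_row_eq hij
    rw [Matrix.updateRow_ne hij, Matrix.updateRow_self, Matrix.updateRow_self]
  have hpp : ((M.updateRow i p).updateRow j p).det = 0 := by
    apply Matrix.det_zero_of_row_eq hij
    rw [Matrix.updateRow_ne hij, Matrix.updateRow_self, Matrix.updateRow_self]
  have hqq : ((M.updateRow i q).updateRow j q).det = 0 := by
    apply Matrix.det_zero_of_row_eq hij
    rw [Matrix.updateRow_ne hij, Matrix.updateRow_self, Matrix.updateRow_self]
  have t1 : ((M.updateRow i (p + q)).updateRow j p).det
      = ((M.updateRow i p).updateRow j p).det + ((M.updateRow i q).updateRow j p).det := by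
    rw [updateRow_comm' M hij, Matrix.det_updateRow_add,
      updateRow_comm' M hij.symm, updateRow_comm' M hij.symm]
  have t2 : ((M.updateRow i (p + q)).updateRow j q).det
      = ((M.updateRow i p).updateRow j q).det + ((M.updateRow i q).updateRow j q).det := by
    rw [updateRow_comm' M hij, Matrix.det_updateRow_add,
      updateRow_comm' M hij.symm, updateRow_comm' M hij.symm]
  have hexp := hpq
  rw [Matrix.det_updateRow_add, t1, t2, hpp, hqq] at hexp
  linear_combination hexp

theorem vec_sum_single (v : Fin N → S) : v = ∑ b, v b • (Pi.single b (1 : S) : Fin N → S) := by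
  funext j
  rw [Finset.sum_apply]
  rw [Finset.sum_eq_single j]
  · rw [Pi.smul_apply, Pi.single_eq_same, smul_eq_mul, mul_one]
  · intro b _ hb
    rw [Pi.smul_apply, Pi.single_eq_of_ne (Ne.symm hb), smul_eq_mul, mul_zero]
  · intro h; exact absurd (Finset.mem_univ j) h

theorem pair_antisym_sum {ι M : Type*} [Fintype ι] [LinearOrder ι] [AddCommMonoid M]
    (A : ι → ι → M) (hdiag : ∀ r, A r r = 0) :
    ∑ r, ∑ l, A r l
      = ∑ r, ∑ l ∈ Finset.univ.filter (fun l => r < l), (A r l + A l r) := by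
  classical
  have h1 : ∀ r : ι, (Finset.univ.filter (fun l => ¬ r < l))
      = insert r (Finset.univ.filter (fun l => l < r)) := by
    intro r; ext l
    simp only [Finset.mem_filter, Finset.mem_insert, Finset.mem_univ, true_and, not_lt]
    constructor
    · intro h
      rcases eq_or_lt_of_le h with h | h
      · exact Or.inl h
      · exact Or.inr h
    · rintro (rfl | h)
      · exact le_rfl
      · exact h.le
  have h2 : ∑ r, ∑ l, A r l = ∑ r, ∑ l ∈ Finset.univ.filter (fun l => r < l), A r l
      + ∑ r, ∑ l ∈ Finset.univ.filter (fun l => l < r), A r l := by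
    rw [← Finset.sum_add_distrib]
    apply Finset.sum_congr rfl
    intro r _
    rw [← Finset.sum_filter_add_sum_filter_not Finset.univ (fun l => r < l) (A r), h1 r,
      Finset.sum_insert (by simp), hdiag, zero_add]
  have h3 : ∑ r, ∑ l ∈ Finset.univ.filter (fun l => l < r), A r l
      = ∑ r, ∑ l ∈ Finset.univ.filter (fun l => r < l), A l r := by
    have e1 : ∑ r, ∑ l ∈ Finset.univ.filter (fun l => l < r), A r l
        = ∑ r : ι, ∑ l : ι, if l < r then A r l else 0 :=
      Finset.sum_congr rfl fun r _ => Finset.sum_filter _ _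
    have e2 : ∑ r, ∑ l ∈ Finset.univ.filter (fun l => r < l), A l r
        = ∑ r : ι, ∑ l : ι, if r < l then A l r else 0 :=
      Finset.sum_congr rfl fun r _ => Finset.sum_filter _ _
    rw [e1, e2, Finset.sum_comm]
  rw [h2, h3, ← Finset.sum_add_distrib]
  apply Finset.sum_congr rfl
  intro r _
  rw [← Finset.sum_add_distrib]

end DetUtil
section Core
variable {S : Type*} [CommRing S] {n : ℕ}

theorem sum4_swap {ι κ M : Type*} [AddCommMonoid M] (s : Finset ι) (t : ι → Finset ι)
    (s' : Finset κ) (t' : κ → Finset κ) (f : ι → ι → κ → κ → M) :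
    ∑ r ∈ s, ∑ l ∈ t r, ∑ a ∈ s', ∑ b ∈ t' a, f r l a b
      = ∑ a ∈ s', ∑ b ∈ t' a, ∑ r ∈ s, ∑ l ∈ t r, f r l a b :=
  calc ∑ r ∈ s, ∑ l ∈ t r, ∑ a ∈ s', ∑ b ∈ t' a, f r l a b
      = ∑ r ∈ s, ∑ a ∈ s', ∑ l ∈ t r, ∑ b ∈ t' a, f r l a b :=
        Finset.sum_congr rfl fun r _ => Finset.sum_comm
    _ = ∑ a ∈ s', ∑ r ∈ s, ∑ l ∈ t r, ∑ b ∈ t' a, f r l a b := Finset.sum_comm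
    _ = ∑ a ∈ s', ∑ r ∈ s, ∑ b ∈ t' a, ∑ l ∈ t r, f r l a b :=
        Finset.sum_congr rfl fun a _ => Finset.sum_congr rfl fun r _ => Finset.sum_comm
    _ = ∑ a ∈ s', ∑ b ∈ t' a, ∑ r ∈ s, ∑ l ∈ t r, f r l a b :=
        Finset.sum_congr rfl fun a _ => Finset.sum_comm

theorem dite_vec_eq_sum (w : Fin n → S) :
    (fun s : Fin (n + 1) => if h : (s : ℕ) < n then w ⟨s, h⟩ else 0)
      = ∑ r : Fin n, w r • (Pi.single r.castSucc (1 : S) : Fin (n + 1) → S) := by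
  classical
  have hccne : ∀ (r l : Fin n), r ≠ l → r.castSucc ≠ l.castSucc := by
    intro r l h hc
    exact h (Fin.castSucc_injective n hc)
  have hclast : ∀ r : Fin n, r.castSucc ≠ Fin.last n := fun r => (Fin.castSucc_lt_last r).ne
  funext s
  rw [Finset.sum_apply]
  induction s using Fin.lastCases with
  | last =>
    rw [dif_neg (by simp)]
    symm
    apply Finset.sum_eq_zero
    intro r _
    rw [Pi.smul_apply, Pi.single_eq_of_ne (hclast r).symm, smul_zero]
  | cast t =>
    have ht : ((t.castSucc : Fin (n + 1)) : ℕ) < n := by simp [t.isLt]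
    rw [dif_pos ht]
    have heq : (⟨((t.castSucc : Fin (n + 1)) : ℕ), ht⟩ : Fin n) = t := by
      apply Fin.ext; simp
    rw [heq]
    rw [Finset.sum_eq_single t]
    · rw [Pi.smul_apply, Pi.single_eq_same, smul_eq_mul, mul_one]
    · intro r _ hr
      rw [Pi.smul_apply, Pi.single_eq_of_ne (hccne t r (Ne.symm hr)), smul_zero]
    · intro h; exact absurd (Finset.mem_univ t) h

theorem core_det (u : Fin n → S) (c : Fin n → Fin n → S)
    (Γ : Matrix (Fin (n + 1)) (Fin (n + 1)) S) (φ ψ : Fin (n + 1) → S) (i0 : Fin (n + 1))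
    (hΓi0 : ∀ s, Γ s i0 = 0)
    (hΓlast : Γ (Fin.last n) = φ)
    (hrel : ∀ j, ∑ s : Fin n, u s * Γ s.castSucc j = φ j - ψ j)
    (hanti : ∀ r l, c l r = -c r l) (hdiag : ∀ r, c r r = 0) :
    (Γ.updateCol i0 (fun s => if h : (s : ℕ) < n then ∑ l, u l * c ⟨s, h⟩ l else 0)).det
      = ∑ a : Fin (n + 1), ∑ b ∈ Finset.univ.filter (fun b => a < b),
          (φ a * ψ b - φ b * ψ a)
            * (∑ r : Fin n, ∑ l ∈ Finset.univ.filter (fun l => r < l),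
                c r l * (((Γ.updateRow r.castSucc (Pi.single i0 1)).updateRow l.castSucc
                    (Pi.single a 1)).updateRow (Fin.last n) (Pi.single b 1)).det) := by
  classical
  set ei0 : Fin (n + 1) → S := Pi.single i0 1 with hei0
  have hccne : ∀ (r l : Fin n), r ≠ l → r.castSucc ≠ l.castSucc := by
    intro r l h hc
    exact h (Fin.castSucc_injective n hc)
  have hclast : ∀ r : Fin n, r.castSucc ≠ Fin.last n := fun r => (Fin.castSucc_lt_last r).ne
  set G : Fin n → S := fun r => (Γ.updateRow r.castSucc ei0).det with hG
  set K : Fin n → Fin n → Fin (n + 1) → Fin (n + 1) → S := fun r l a b =>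
    (((Γ.updateRow r.castSucc ei0).updateRow l.castSucc
      (Pi.single a 1)).updateRow (Fin.last n) (Pi.single b 1)).det with hK
  -- Step A
  have stepA : (Γ.updateCol i0
        (fun s => if h : (s : ℕ) < n then ∑ l, u l * c ⟨s, h⟩ l else 0)).det
      = ∑ r, (∑ l, u l * c r l) * G r := by
    rw [show (fun s : Fin (n + 1) => if h : (s : ℕ) < n then ∑ l, u l * c ⟨s, h⟩ l else 0)
        = ∑ r : Fin n, (∑ l, u l * c r l) • (Pi.single r.castSucc (1 : S) : Fin (n + 1) → S)
        from dite_vec_eq_sum (fun r => ∑ l, u l * c r l)]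
    rw [det_updateCol_sum']
    apply Finset.sum_congr rfl
    intro r _
    rw [Matrix.det_updateCol_smul]
    congr 1
    have hmat : Γ.updateCol i0 (Pi.single r.castSucc 1)
        = Γ.updateRow r.castSucc (Γ r.castSucc + ei0) := by
      ext s j
      rcases eq_or_ne j i0 with rfl | hj
      · rw [Matrix.updateCol_self]
        rcases eq_or_ne s r.castSucc with rfl | hs
        · rw [Matrix.updateRow_self, Pi.add_apply, Pi.single_eq_same, hΓi0, hei0,
            Pi.single_eq_same, zero_add]
        · rw [Matrix.updateRow_ne hs, Pi.single_eq_of_ne hs, hΓi0]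
      · rw [Matrix.updateCol_ne hj]
        rcases eq_or_ne s r.castSucc with rfl | hs
        · rw [Matrix.updateRow_self, Pi.add_apply, hei0, Pi.single_eq_of_ne hj, add_zero]
        · rw [Matrix.updateRow_ne hs]
    rw [hmat, Matrix.det_updateRow_add, Matrix.updateRow_eq_self]
    rw [Matrix.det_eq_zero_of_column_eq_zero i0 hΓi0, zero_add]
  -- Step C
  have stepC : ∀ r l : Fin n, r ≠ l →
      u l * G r - u r * G l
        = -(((Γ.updateRow r.castSucc ei0).updateRow l.castSucc ψ).det) := by
    intro r l hrl
    have hne : l.castSucc ≠ r.castSucc := hccne l r (Ne.symm hrl)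
    set X1 := Γ.updateRow r.castSucc ei0 with hX1
    have hX1l : X1 l.castSucc = Γ l.castSucc := Matrix.updateRow_ne hne
    have e1 : X1.updateRow l.castSucc (Γ l.castSucc) = X1 := by
      rw [← hX1l, Matrix.updateRow_eq_self]
    have hC2 : u l * G r = (X1.updateRow l.castSucc (u l • Γ l.castSucc)).det := by
      rw [Matrix.det_updateRow_smul, e1]
    have hGl : G l = -((X1.updateRow l.castSucc (Γ r.castSucc)).det) := by
      have e2 : Γ.updateRow r.castSucc (Γ r.castSucc) = Γ := Matrix.updateRow_eq_self Γ _
      have e3 : G l = ((Γ.updateRow r.castSucc (Γ r.castSucc)).updateRow l.castSucc ei0).det := by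
        rw [e2]
      rw [e3, det_updateRow_updateRow_swap Γ (Ne.symm hne) (Γ r.castSucc) ei0]
    have hC3 : u r * G l = -((X1.updateRow l.castSucc (u r • Γ r.castSucc)).det) := by
      rw [hGl, Matrix.det_updateRow_smul]
      ring
    have hsumrow : (∑ s : Fin n, u s • Γ s.castSucc : Fin (n + 1) → S) = φ - ψ := by
      funext j
      rw [Finset.sum_apply]
      simp only [Pi.smul_apply, smul_eq_mul]
      rw [hrel j, Pi.sub_apply]
    have hC5 : (X1.updateRow l.castSucc (φ - ψ)).det = u l * G r - u r * G l := by
      rw [← hsumrow, det_updateRow_sum']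
      rw [← Finset.sum_subset (Finset.subset_univ ({r, l} : Finset (Fin n)))]
      · rw [Finset.sum_pair hrl]
        linear_combination hC3 - hC2
      · intro s _ hs
        simp only [Finset.mem_insert, Finset.mem_singleton] at hs
        push_neg at hs
        rw [Matrix.det_updateRow_smul]
        have hrow_eq : (X1.updateRow l.castSucc (Γ s.castSucc)) s.castSucc
            = (X1.updateRow l.castSucc (Γ s.castSucc)) l.castSucc := by
          rw [Matrix.updateRow_self, Matrix.updateRow_ne (hccne s l hs.2), hX1,
            Matrix.updateRow_ne (hccne s r hs.1)]
        rw [Matrix.det_zero_of_row_eq (hccne s l hs.2) hrow_eq, mul_zero]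
    have hC7 : (X1.updateRow l.castSucc φ).det = 0 := by
      apply Matrix.det_zero_of_row_eq (hclast l)
      rw [Matrix.updateRow_self, Matrix.updateRow_ne (hclast l).symm, hX1,
        Matrix.updateRow_ne (hclast r).symm, hΓlast]
    have hsub : φ - ψ = φ + (-1 : S) • ψ := by
      funext j
      simp only [Pi.sub_apply, Pi.add_apply, Pi.smul_apply, smul_eq_mul]
      ring
    rw [← hC5, hsub, Matrix.det_updateRow_add, Matrix.det_updateRow_smul, hC7]
    ring
  -- Step D
  have stepD : ∀ r l : Fin n, r ≠ l →
      ((Γ.updateRow r.castSucc ei0).updateRow l.castSucc ψ).det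
        = ∑ b, φ b * ∑ a, ψ a * K r l a b := by
    intro r l hrl
    set X1 := Γ.updateRow r.castSucc ei0 with hX1
    set X2 := X1.updateRow l.castSucc ψ with hX2
    have e4 : X2 (Fin.last n) = φ := by
      rw [hX2, Matrix.updateRow_ne (hclast l).symm, hX1,
        Matrix.updateRow_ne (hclast r).symm, hΓlast]
    have e5 : X2.det = (X2.updateRow (Fin.last n) φ).det := by
      rw [← e4, Matrix.updateRow_eq_self]
    rw [e5]
    conv_lhs => rw [vec_sum_single φ]
    rw [det_updateRow_sum']
    apply Finset.sum_congr rfl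
    intro b _
    rw [Matrix.det_updateRow_smul]
    congr 1
    have e6 : X2.updateRow (Fin.last n) (Pi.single b 1)
        = (X1.updateRow (Fin.last n) (Pi.single b 1)).updateRow l.castSucc ψ := by
      rw [hX2, updateRow_comm' X1 (hclast l)]
    rw [e6]
    conv_lhs => rw [vec_sum_single ψ]
    rw [det_updateRow_sum']
    apply Finset.sum_congr rfl
    intro a _
    rw [Matrix.det_updateRow_smul]
    congr 1
    rw [updateRow_comm' X1 (Ne.symm (hclast l))]
  -- Step D2
  have stepD2 : ∀ r l : Fin n, r ≠ l →
      u l * G r - u r * G l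
        = ∑ a : Fin (n + 1), ∑ b ∈ Finset.univ.filter (fun b => a < b),
            (φ a * ψ b - φ b * ψ a) * K r l a b := by
    intro r l hrl
    rw [stepC r l hrl, stepD r l hrl]
    have h1 : -(∑ b, φ b * ∑ a, ψ a * K r l a b)
        = ∑ a : Fin (n + 1), ∑ b : Fin (n + 1), -(ψ a * (φ b * K r l a b)) := by
      rw [← Finset.sum_neg_distrib, Finset.sum_comm]
      apply Finset.sum_congr rfl
      intro b _
      rw [Finset.mul_sum, ← Finset.sum_neg_distrib]
      apply Finset.sum_congr rfl
      intro a _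
      ring
    rw [h1, pair_antisym_sum (fun a b => -(ψ a * (φ b * K r l a b)))]
    · apply Finset.sum_congr rfl
      intro a _
      apply Finset.sum_congr rfl
      intro b _
      have hKswap : K r l b a = -K r l a b := by
        have e7 : K r l b a = (((Γ.updateRow r.castSucc ei0).updateRow l.castSucc
            (Pi.single b 1)).updateRow (Fin.last n) (Pi.single a 1)).det := rfl
        have e8 : K r l a b = (((Γ.updateRow r.castSucc ei0).updateRow l.castSucc
            (Pi.single a 1)).updateRow (Fin.last n) (Pi.single b 1)).det := rfl
        rw [e7, e8]
        exact det_updateRow_updateRow_swap _ (hclast l) _ _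
      rw [hKswap]
      ring
    · intro a
      have hKdiag : K r l a a = 0 := by
        have : K r l a a = (((Γ.updateRow r.castSucc ei0).updateRow l.castSucc
            (Pi.single a 1)).updateRow (Fin.last n) (Pi.single a 1)).det := rfl
        rw [this]
        apply Matrix.det_zero_of_row_eq (hclast l)
        rw [Matrix.updateRow_ne (hclast l), Matrix.updateRow_self, Matrix.updateRow_self]
      rw [hKdiag]
      ring
  -- Step B and final assembly
  rw [stepA]
  have stepB : ∑ r, (∑ l, u l * c r l) * G r
      = ∑ r, ∑ l ∈ Finset.univ.filter (fun l => r < l), c r l * (u l * G r - u r * G l) := by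
    have h1 : ∑ r, (∑ l, u l * c r l) * G r = ∑ r, ∑ l, (u l * c r l) * G r := by
      apply Finset.sum_congr rfl
      intro r _
      rw [Finset.sum_mul]
    rw [h1, pair_antisym_sum (fun r l => (u l * c r l) * G r)]
    · apply Finset.sum_congr rfl
      intro r _
      apply Finset.sum_congr rfl
      intro l _
      rw [hanti r l]
      ring
    · intro r
      rw [hdiag r]
      ring
  rw [stepB]
  have h2 : ∑ r, ∑ l ∈ Finset.univ.filter (fun l => r < l), c r l * (u l * G r - u r * G l)
      = ∑ r, ∑ l ∈ Finset.univ.filter (fun l => r < l), ∑ a : Fin (n + 1),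
          ∑ b ∈ Finset.univ.filter (fun b => a < b),
            c r l * ((φ a * ψ b - φ b * ψ a) * K r l a b) := by
    apply Finset.sum_congr rfl
    intro r _
    apply Finset.sum_congr rfl
    intro l hl
    rw [Finset.mem_filter] at hl
    rw [stepD2 r l (ne_of_lt hl.2), Finset.mul_sum]
    apply Finset.sum_congr rfl
    intro a _
    rw [Finset.mul_sum]
  rw [h2, sum4_swap]
  apply Finset.sum_congr rfl
  intro a _
  apply Finset.sum_congr rfl
  intro b _
  conv_rhs => rw [Finset.mul_sum]
  apply Finset.sum_congr rfl
  intro r _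
  conv_rhs => rw [Finset.mul_sum]
  apply Finset.sum_congr rfl
  intro l _
  have hKr : K r l a b = (((Γ.updateRow r.castSucc ei0).updateRow l.castSucc
      (Pi.single a 1)).updateRow (Fin.last n) (Pi.single b 1)).det := rfl
  rw [hKr]
  ring

end Core
section KDeg
variable {σR R : Type*} [CommRing R] {n : ℕ}

theorem mdeg_intCast_le (z : ℤ) : mdeg ((z : ℤ) : MvPolynomial σR R) ≤ 0 := by
  rw [← map_intCast (MvPolynomial.C : R →+* MvPolynomial σR R) z]
  exact mdeg_C_le _

theorem mdeg_det_three_single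
    (Γ : Matrix (Fin (n + 1)) (Fin (n + 1)) (MvPolynomial σR R))
    (r' l' : Fin (n + 1)) (i0 a b : Fin (n + 1)) (Dcol : Fin (n + 1) → ℤ)
    (hrl : r' ≠ l') (hrlast : r' ≠ Fin.last n) (hllast : l' ≠ Fin.last n)
    (hia : i0 ≠ a) (hib : i0 ≠ b) (hab : a ≠ b)
    (hent : ∀ s j, s ≠ r' → s ≠ l' → s ≠ Fin.last n → mdeg (Γ s j) ≤ (Dcol j : WithBot ℤ)) :
    mdeg (((Γ.updateRow r' (Pi.single i0 1)).updateRow l' (Pi.single a 1)).updateRow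
      (Fin.last n) (Pi.single b 1)).det
      ≤ (((∑ j ∈ ({i0, a, b} : Finset (Fin (n + 1)))ᶜ, Dcol j) : ℤ) : WithBot ℤ) := by
  classical
  set M := ((Γ.updateRow r' (Pi.single i0 1)).updateRow l' (Pi.single a 1)).updateRow
      (Fin.last n) (Pi.single b 1) with hM
  have hMr' : M r' = Pi.single i0 1 := by
    rw [hM, Matrix.updateRow_ne hrlast, Matrix.updateRow_ne hrl, Matrix.updateRow_self]
  have hMl' : M l' = Pi.single a 1 := by
    rw [hM, Matrix.updateRow_ne hllast, Matrix.updateRow_self]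
  have hMlast : M (Fin.last n) = Pi.single b 1 := by
    rw [hM, Matrix.updateRow_self]
  have hMother : ∀ s, s ≠ r' → s ≠ l' → s ≠ Fin.last n → M s = Γ s := by
    intro s h1 h2 h3
    rw [hM, Matrix.updateRow_ne h3, Matrix.updateRow_ne h2, Matrix.updateRow_ne h1]
  rw [Matrix.det_apply']
  apply mdeg_sum_le
  intro σp _
  by_cases h1 : σp i0 = r'
  · by_cases h2 : σp a = l'
    · by_cases h3 : σp b = Fin.last n
      · -- main case
        have hset : ({i0, a, b} : Finset (Fin (n + 1))) = insert i0 {a, b} := rfl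
        have hi0nab : i0 ∉ ({a, b} : Finset (Fin (n + 1))) := by
          simp [hia, hib]
        have hprod := (Finset.prod_mul_prod_compl ({i0, a, b} : Finset (Fin (n + 1)))
          (fun j => M (σp j) j)).symm
        have hone : ∏ j ∈ ({i0, a, b} : Finset (Fin (n + 1))), M (σp j) j = 1 := by
          rw [hset, Finset.prod_insert hi0nab, Finset.prod_pair hab]
          rw [h1, h2, h3, hMr', hMl', hMlast]
          rw [Pi.single_eq_same, Pi.single_eq_same, Pi.single_eq_same]
          ring
        have heq : ∏ j, M (σp j) j = ∏ j ∈ ({i0, a, b} : Finset (Fin (n + 1)))ᶜ, M (σp j) j := by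
          rw [hprod, hone, one_mul]
        rw [heq]
        refine le_trans (mdeg_mul_le _ _) ?_
        have hb1 : mdeg (((Equiv.Perm.sign σp : ℤ) : MvPolynomial σR R)) ≤ 0 :=
          mdeg_intCast_le _
        have hb2 : mdeg (∏ j ∈ ({i0, a, b} : Finset (Fin (n + 1)))ᶜ, M (σp j) j)
            ≤ ∑ j ∈ ({i0, a, b} : Finset (Fin (n + 1)))ᶜ, ((Dcol j : ℤ) : WithBot ℤ) := by
          apply mdeg_prod_le
          intro j hj
          simp only [Finset.mem_compl, Finset.mem_insert, Finset.mem_singleton] at hj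
          push_neg at hj
          have hs1 : σp j ≠ r' := fun hc => hj.1 (σp.injective (hc.trans h1.symm))
          have hs2 : σp j ≠ l' := fun hc => hj.2.1 (σp.injective (hc.trans h2.symm))
          have hs3 : σp j ≠ Fin.last n := fun hc => hj.2.2 (σp.injective (hc.trans h3.symm))
          rw [hMother (σp j) hs1 hs2 hs3]
          exact hent (σp j) j hs1 hs2 hs3
        refine le_trans (add_le_add hb1 hb2) ?_
        rw [zero_add, wb_coe_sum]
      · -- σp b ≠ last : the factor at column σp.symm (Fin.last n) is 0
        have hz : M (Fin.last n) (σp.symm (Fin.last n)) = 0 := by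
          rw [hMlast]
          apply Pi.single_eq_of_ne
          intro hc
          apply h3
          rw [← hc, Equiv.apply_symm_apply]
        have : ∏ j, M (σp j) j = 0 := by
          apply Finset.prod_eq_zero (Finset.mem_univ (σp.symm (Fin.last n)))
          rw [Equiv.apply_symm_apply]
          exact hz
        rw [this, mul_zero, mdeg_zero]
        exact bot_le
    · have hz : M l' (σp.symm l') = 0 := by
        rw [hMl']
        apply Pi.single_eq_of_ne
        intro hc
        apply h2
        rw [← hc, Equiv.apply_symm_apply]
      have : ∏ j, M (σp j) j = 0 := by
        apply Finset.prod_eq_zero (Finset.mem_univ (σp.symm l'))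
        rw [Equiv.apply_symm_apply]
        exact hz
      rw [this, mul_zero, mdeg_zero]
      exact bot_le
  · have hz : M r' (σp.symm r') = 0 := by
      rw [hMr']
      apply Pi.single_eq_of_ne
      intro hc
      apply h1
      rw [← hc, Equiv.apply_symm_apply]
    have : ∏ j, M (σp j) j = 0 := by
      apply Finset.prod_eq_zero (Finset.mem_univ (σp.symm r'))
      rw [Equiv.apply_symm_apply]
      exact hz
    rw [this, mul_zero, mdeg_zero]
    exact bot_le

end KDeg
section MainDefs

def bigMat (f : Fin n → MvPolynomial (Fin n) R)
    (Df : Fin n → Fin n → MvPolynomial (Fin n ⊕ Fin n) R)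
    (F : MvPolynomial (Fin n) R) (DF : Fin n → MvPolynomial (Fin n ⊕ Fin n) R) :
    Matrix (Fin (n + 1)) (Fin (n + 1)) (MvPolynomial (Fin n ⊕ Fin n) R) :=
  Matrix.of fun k i : Fin (n + 1) =>
    if hk : (k : ℕ) < n then
      if hi : (i : ℕ) < n then Df ⟨i, hi⟩ ⟨k, hk⟩ else DF ⟨k, hk⟩
    else
      if hi : (i : ℕ) < n then toX (f ⟨i, hi⟩) else toX F

def phiX (f : Fin n → MvPolynomial (Fin n) R) (F : MvPolynomial (Fin n) R) :
    Fin (n + 1) → MvPolynomial (Fin n ⊕ Fin n) R :=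
  fun j => if hj : (j : ℕ) < n then toX (f ⟨j, hj⟩) else toX F

def phiY (f : Fin n → MvPolynomial (Fin n) R) (F : MvPolynomial (Fin n) R) :
    Fin (n + 1) → MvPolynomial (Fin n ⊕ Fin n) R :=
  fun j => if hj : (j : ℕ) < n then toY (f ⟨j, hj⟩) else toY F

def hatGamma (f : Fin n → MvPolynomial (Fin n) R)
    (Df : Fin n → Fin n → MvPolynomial (Fin n ⊕ Fin n) R)
    (F : MvPolynomial (Fin n) R) (DF : Fin n → MvPolynomial (Fin n ⊕ Fin n) R)
    (i0 : Fin (n + 1)) :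
    Matrix (Fin (n + 1)) (Fin (n + 1)) (MvPolynomial (Fin n ⊕ Fin n) R) :=
  Matrix.of fun s j => if j = i0 then 0 else bigMat f Df F DF s j

def kDet (f : Fin n → MvPolynomial (Fin n) R)
    (Df : Fin n → Fin n → MvPolynomial (Fin n ⊕ Fin n) R)
    (F : MvPolynomial (Fin n) R) (DF : Fin n → MvPolynomial (Fin n ⊕ Fin n) R)
    (mf : Fin n) (r l : Fin n) (a b : Fin (n + 1)) : MvPolynomial (Fin n ⊕ Fin n) R :=
  ((((hatGamma f Df F DF mf.castSucc).updateRow r.castSucc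
      (Pi.single mf.castSucc 1)).updateRow l.castSucc
      (Pi.single a 1)).updateRow (Fin.last n) (Pi.single b 1)).det

theorem kDet_zero_left (f : Fin n → MvPolynomial (Fin n) R) (Df F DF) (mf : Fin n)
    {r l : Fin n} (hrl : r ≠ l) (b : Fin (n + 1)) :
    kDet f Df F DF mf r l mf.castSucc b = 0 := by
  have hccne : r.castSucc ≠ l.castSucc := fun hc => hrl (Fin.castSucc_injective n hc)
  apply Matrix.det_zero_of_row_eq hccne
  rw [Matrix.updateRow_ne (Fin.castSucc_lt_last r).ne,
    Matrix.updateRow_ne (Fin.castSucc_lt_last l).ne,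
    Matrix.updateRow_ne hccne, Matrix.updateRow_self, Matrix.updateRow_self]

theorem kDet_zero_right (f : Fin n → MvPolynomial (Fin n) R) (Df F DF) (mf : Fin n)
    {r l : Fin n} (hrl : r ≠ l) (a : Fin (n + 1)) :
    kDet f Df F DF mf r l a mf.castSucc = 0 := by
  apply Matrix.det_zero_of_row_eq (Fin.castSucc_lt_last r).ne
  rw [Matrix.updateRow_ne (Fin.castSucc_lt_last r).ne, Matrix.updateRow_self,
    Matrix.updateRow_ne (fun hc => hrl (Fin.castSucc_injective n hc)),
    Matrix.updateRow_self]
end MainDefs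
section StepM

theorem step_m (f : Fin n → MvPolynomial (Fin n) R)
    (F : MvPolynomial (Fin n) R) (DF : Fin n → MvPolynomial (Fin n ⊕ Fin n) R)
    (hDF : ∑ k : Fin n, (X (Sum.inl k) - X (Sum.inr k)) * DF k = toX F - toY F)
    (Dm Dm1 : Fin n → Fin n → MvPolynomial (Fin n ⊕ Fin n) R) (mf : Fin n)
    (hDd : ∀ j : Fin n, j ≠ mf → Dm j = Dm1 j)
    (hDmder : ∀ j, ∑ k : Fin n, (X (Sum.inl k) - X (Sum.inr k)) * Dm j k
      = toX (f j) - toY (f j))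
    (c : Fin n → Fin n → MvPolynomial (Fin n ⊕ Fin n) R)
    (hanti : ∀ r l, c l r = -c r l) (hdiag : ∀ r, c r r = 0)
    (hrep : ∀ k, Dm mf k - Dm1 mf k
      = ∑ l, (X (Sum.inl l) - X (Sum.inr l)) * c k l) :
    (bigMat f Dm F DF).det - (bigMat f Dm1 F DF).det
      = ∑ a : Fin (n + 1), ∑ b ∈ Finset.univ.filter (fun b => a < b),
          (phiX f F a * phiY f F b - phiX f F b * phiY f F a)
            * (∑ r : Fin n, ∑ l ∈ Finset.univ.filter (fun l => r < l),
                c r l * kDet f Dm F DF mf r l a b) := by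
  classical
  set u : Fin n → MvPolynomial (Fin n ⊕ Fin n) R :=
    fun k => X (Sum.inl k) - X (Sum.inr k) with hu
  set i0 : Fin (n + 1) := mf.castSucc with hi0
  set Γm := hatGamma f Dm F DF i0 with hΓm
  have hi0n : (i0 : ℕ) < n := by
    rw [hi0, Fin.coe_castSucc]
    exact mf.isLt
  have hi0mf : (⟨(i0 : ℕ), hi0n⟩ : Fin n) = mf := by
    apply Fin.ext
    simp [hi0]
  have hΓent : ∀ s j, j ≠ i0 → Γm s j = bigMat f Dm F DF s j := by
    intro s j hj
    rw [hΓm, hatGamma, Matrix.of_apply, if_neg hj]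
  have hΓi0' : ∀ s, Γm s i0 = 0 := by
    intro s
    rw [hΓm, hatGamma, Matrix.of_apply, if_pos rfl]
  -- telescope within the column
  have hT1 : bigMat f Dm F DF = Γm.updateCol i0 (fun s => bigMat f Dm F DF s i0) := by
    apply Matrix.ext
    intro s j
    rcases eq_or_ne j i0 with rfl | hj
    · rw [Matrix.updateCol_self]
    · rw [Matrix.updateCol_ne hj, hΓent s j hj]
  have hT2 : bigMat f Dm1 F DF = Γm.updateCol i0 (fun s => bigMat f Dm1 F DF s i0) := by
    apply Matrix.ext
    intro s j
    rcases eq_or_ne j i0 with rfl | hj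
    · rw [Matrix.updateCol_self]
    · rw [Matrix.updateCol_ne hj, hΓent s j hj]
      rcases lt_or_ge (j : ℕ) n with hjn | hjn
      · have hjmf : (⟨(j : ℕ), hjn⟩ : Fin n) ≠ mf := by
          intro hc
          apply hj
          apply Fin.ext
          rw [hi0, Fin.coe_castSucc, ← hc]
        rcases lt_or_ge (s : ℕ) n with hsn | hsn
        · simp only [bigMat, Matrix.of_apply, dif_pos hsn, dif_pos hjn]
          rw [hDd _ hjmf]
        · simp only [bigMat, Matrix.of_apply, dif_neg (not_lt.mpr hsn), dif_pos hjn]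
      · rcases lt_or_ge (s : ℕ) n with hsn | hsn
        · simp only [bigMat, Matrix.of_apply, dif_pos hsn, dif_neg (not_lt.mpr hjn)]
        · simp only [bigMat, Matrix.of_apply, dif_neg (not_lt.mpr hsn),
            dif_neg (not_lt.mpr hjn)]
  have hdiff : (bigMat f Dm F DF).det - (bigMat f Dm1 F DF).det
      = (Γm.updateCol i0 (fun s =>
          if hs : (s : ℕ) < n then ∑ l, u l * c ⟨s, hs⟩ l else 0)).det := by
    have hsplit : (fun s => bigMat f Dm F DF s i0)
        = (fun s : Fin (n + 1) => if hs : (s : ℕ) < n then ∑ l, u l * c ⟨s, hs⟩ l else 0)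
          + (fun s => bigMat f Dm1 F DF s i0) := by
      funext s
      rw [Pi.add_apply]
      rcases lt_or_ge (s : ℕ) n with hsn | hsn
      · rw [dif_pos hsn]
        have e1 : bigMat f Dm F DF s i0 = Dm mf ⟨s, hsn⟩ := by
          simp only [bigMat, Matrix.of_apply, dif_pos hsn, dif_pos hi0n]
          rw [hi0mf]
        have e2 : bigMat f Dm1 F DF s i0 = Dm1 mf ⟨s, hsn⟩ := by
          simp only [bigMat, Matrix.of_apply, dif_pos hsn, dif_pos hi0n]
          rw [hi0mf]
        rw [e1, e2, ← hrep ⟨s, hsn⟩]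
        ring
      · rw [dif_neg (not_lt.mpr hsn)]
        have e1 : bigMat f Dm F DF s i0 = toX (f mf) := by
          simp only [bigMat, Matrix.of_apply, dif_neg (not_lt.mpr hsn), dif_pos hi0n]
          rw [hi0mf]
        have e2 : bigMat f Dm1 F DF s i0 = toX (f mf) := by
          simp only [bigMat, Matrix.of_apply, dif_neg (not_lt.mpr hsn), dif_pos hi0n]
          rw [hi0mf]
        rw [e1, e2, zero_add]
    conv_lhs => rw [hT1, hT2]
    rw [hsplit, Matrix.det_updateCol_add]
    ring
  -- hypotheses of core_det
  have hΓlast : Γm (Fin.last n) = fun j => if j = i0 then 0 else phiX f F j := by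
    funext j
    rcases eq_or_ne j i0 with rfl | hj
    · rw [hΓi0', if_pos rfl]
    · rw [hΓent _ j hj, if_neg hj]
      simp only [bigMat, Matrix.of_apply, dif_neg (by simp : ¬ ((Fin.last n : ℕ) < n)), phiX]
  have hrel : ∀ j, ∑ s : Fin n, u s * Γm s.castSucc j
      = (if j = i0 then 0 else phiX f F j) - (if j = i0 then 0 else phiY f F j) := by
    intro j
    rcases eq_or_ne j i0 with rfl | hj
    · have hz : ∀ s : Fin n, u s * Γm s.castSucc i0 = 0 := fun s => by
        rw [hΓi0', mul_zero]
      rw [Finset.sum_congr rfl (fun s _ => hz s), Finset.sum_const_zero, if_pos rfl, if_pos rfl, sub_zero]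
    · rw [if_neg hj, if_neg hj]
      rcases lt_or_ge (j : ℕ) n with hjn | hjn
      · have hent2 : ∀ s : Fin n, Γm s.castSucc j = Dm ⟨j, hjn⟩ s := by
          intro s
          rw [hΓent _ j hj]
          have hcs : ((s.castSucc : Fin (n + 1)) : ℕ) < n := by simp [s.isLt]
          simp only [bigMat, Matrix.of_apply, dif_pos hcs, dif_pos hjn]
          congr 1
        rw [Finset.sum_congr rfl (fun s _ => by rw [hent2 s])]
        simp only [phiX, phiY, dif_pos hjn]
        exact hDmder ⟨j, hjn⟩
      · have hent2 : ∀ s : Fin n, Γm s.castSucc j = DF s := by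
          intro s
          rw [hΓent _ j hj]
          have hcs : ((s.castSucc : Fin (n + 1)) : ℕ) < n := by simp [s.isLt]
          simp only [bigMat, Matrix.of_apply, dif_pos hcs, dif_neg (not_lt.mpr hjn)]
          congr 1
        rw [Finset.sum_congr rfl (fun s _ => by rw [hent2 s])]
        simp only [phiX, phiY, dif_neg (not_lt.mpr hjn)]
        exact hDF
  have hcore := core_det u c Γm
    (fun j => if j = i0 then 0 else phiX f F j)
    (fun j => if j = i0 then 0 else phiY f F j)
    i0 hΓi0' hΓlast hrel hanti hdiag
  rw [hdiff, hcore]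
  -- bridge hatted brackets to true brackets
  apply Finset.sum_congr rfl
  intro a _
  apply Finset.sum_congr rfl
  intro b hb
  rw [Finset.mem_filter] at hb
  rcases eq_or_ne a i0 with rfl | ha
  · have hL : (if i0 = i0 then 0 else phiX f F i0) * (if b = i0 then 0 else phiY f F b)
        - (if b = i0 then 0 else phiX f F b) * (if i0 = i0 then 0 else phiY f F i0)
        = (0 : MvPolynomial (Fin n ⊕ Fin n) R) := by
      rw [if_pos rfl, if_pos rfl]
      ring
    rw [hL, zero_mul]
    have hR : ∑ r : Fin n, ∑ l ∈ Finset.univ.filter (fun l => r < l),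
        c r l * kDet f Dm F DF mf r l i0 b = 0 := by
      apply Finset.sum_eq_zero
      intro r _
      apply Finset.sum_eq_zero
      intro l hl
      rw [Finset.mem_filter] at hl
      rw [hi0, kDet_zero_left f Dm F DF mf (ne_of_lt hl.2), mul_zero]
    rw [hR, mul_zero]
  · rcases eq_or_ne b i0 with rfl | hbne
    · have hL : (if a = i0 then 0 else phiX f F a) * (if i0 = i0 then 0 else phiY f F i0)
          - (if i0 = i0 then 0 else phiX f F i0) * (if a = i0 then 0 else phiY f F a)
          = (0 : MvPolynomial (Fin n ⊕ Fin n) R) := by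
        rw [if_pos rfl, if_pos rfl]
        ring
      rw [hL, zero_mul]
      have hR : ∑ r : Fin n, ∑ l ∈ Finset.univ.filter (fun l => r < l),
          c r l * kDet f Dm F DF mf r l a i0 = 0 := by
        apply Finset.sum_eq_zero
        intro r _
        apply Finset.sum_eq_zero
        intro l hl
        rw [Finset.mem_filter] at hl
        rw [hi0, kDet_zero_right f Dm F DF mf (ne_of_lt hl.2), mul_zero]
      rw [hR, mul_zero]
    · simp only [if_neg ha, if_neg hbne]
      rfl

end StepM
/-- independence (up to the stated addend) of `R(x,y)` of the choice of the
monotonous difference derivatives `∇fᵢ`. -/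
theorem ddetX_sub_of_Df {R : Type*} [CommRing R] {n : ℕ}
    (f : Fin n → MvPolynomial (Fin n) R) (hf : ∀ i, (1 : WithBot ℤ) ≤ mdeg (f i))
    (d : ℤ) (F : MvPolynomial (Fin n) R) (hF : mdeg F ≤ (d : WithBot ℤ))
    (DF : Fin n → MvPolynomial (Fin n ⊕ Fin n) R)
    (hDF : IsDiffDeriv F DF) (hDFdeg : ∀ k, mdeg (DF k) ≤ ((d - 1 : ℤ) : WithBot ℤ))
    (Df' Df'' : Fin n → Fin n → MvPolynomial (Fin n ⊕ Fin n) R)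
    (hDf' : ∀ i, IsDiffDeriv (f i) (Df' i) ∧ IsMonotonous (f i) (Df' i))
    (hDf'' : ∀ i, IsDiffDeriv (f i) (Df'' i) ∧ IsMonotonous (f i) (Df'' i)) :
    ∃ (ω : Fin n → Fin n → MvPolynomial (Fin n ⊕ Fin n) R)
      (Ω : Fin n → MvPolynomial (Fin n ⊕ Fin n) R),
      (∀ i j, i < j →
        mdeg (f i) + mdeg (f j) + mdeg (ω i j) ≤ ((deltaF f + d : ℤ) : WithBot ℤ)) ∧
      (∀ i, mdeg (f i) + mdeg (Ω i) ≤ ((deltaF f : ℤ) : WithBot ℤ)) ∧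
      ddetX f Df' F DF - ddetX f Df'' F DF =
        (∑ i, ∑ j ∈ Finset.univ.filter (fun j => i < j),
          (toX (f i) * toY (f j) - toY (f i) * toX (f j)) * ω i j) +
        ∑ i, (toX (f i) * toY F - toY (f i) * toX F) * Ω i := by

  classical
  -- basic degree facts
  have hne0 : ∀ i, f i ≠ 0 := by
    intro i h
    have h2 := hf i
    rw [h, mdeg_zero] at h2
    exact absurd h2 (by simp)
  set df : Fin n → ℤ := fun i => ((f i).totalDegree : ℤ) with hdfdef
  have hmdegf : ∀ i, mdeg (f i) = ((df i : ℤ) : WithBot ℤ) := fun i =>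
    mdeg_eq_totalDegree (hne0 i)
  have hDf'deg : ∀ i k, mdeg (Df' i k) ≤ ((df i - 1 : ℤ) : WithBot ℤ) := by
    intro i k
    have h2 := (hDf' i).2 k
    rw [hmdegf i] at h2
    exact wb_add_one_le.mp h2
  have hDf''deg : ∀ i k, mdeg (Df'' i k) ≤ ((df i - 1 : ℤ) : WithBot ℤ) := by
    intro i k
    have h2 := (hDf'' i).2 k
    rw [hmdegf i] at h2
    exact wb_add_one_le.mp h2
  -- Koszul coefficients for the column differences
  have hEzero : ∀ m : Fin n,
      ∑ k, (X (Sum.inl k) - X (Sum.inr k)) * (Df' m k - Df'' m k) = 0 := by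
    intro m
    have h1 : ∑ k, (X (Sum.inl k) - X (Sum.inr k)) * Df' m k
        = toX (f m) - toY (f m) := (hDf' m).1
    have h2 : ∑ k, (X (Sum.inl k) - X (Sum.inr k)) * Df'' m k
        = toX (f m) - toY (f m) := (hDf'' m).1
    have h3 : ∑ k, (X (Sum.inl k) - X (Sum.inr k)) * (Df' m k - Df'' m k)
        = (∑ k, (X (Sum.inl k) - X (Sum.inr k)) * Df' m k)
          - ∑ k, (X (Sum.inl k) - X (Sum.inr k)) * Df'' m k := by
      rw [← Finset.sum_sub_distrib]
      apply Finset.sum_congr rfl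
      intro k _
      ring
    rw [h3, h1, h2, sub_self]
  choose cc hanti hdiag hrep hdeg using fun m : Fin n =>
    koszul_u (fun k => Df' m k - Df'' m k) (hEzero m)
  have hccdeg : ∀ m r l, mdeg (cc m r l) ≤ ((df m - 2 : ℤ) : WithBot ℤ) := by
    intro m r l
    have h2 := hdeg m (df m - 1) (fun k => le_trans (mdeg_sub_le _ _)
      (max_le (hDf'deg m k) (hDf''deg m k))) r l
    have h3 : (df m - 1 - 1 : ℤ) = df m - 2 := by ring
    rwa [h3] at h2
  -- mixed systems and telescoping
  set Dmix : ℕ → Fin n → Fin n → MvPolynomial (Fin n ⊕ Fin n) R :=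
    fun m j => if (j : ℕ) < m then Df'' j else Df' j with hDmixdef
  have hDmixder : ∀ (m : ℕ) (j : Fin n),
      ∑ k, (X (Sum.inl k) - X (Sum.inr k)) * Dmix m j k = toX (f j) - toY (f j) := by
    intro m j
    by_cases hj : (j : ℕ) < m
    · simp only [hDmixdef, if_pos hj]
      exact (hDf'' j).1
    · simp only [hDmixdef, if_neg hj]
      exact (hDf' j).1
  have hbig1 : ddetX f Df' F DF = (bigMat f (Dmix 0) F DF).det := by
    have he : Dmix 0 = Df' := by
      funext j k
      simp [hDmixdef]
    rw [he]
    rfl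
  have hbig2 : ddetX f Df'' F DF = (bigMat f (Dmix n) F DF).det := by
    have he : Dmix n = Df'' := by
      funext j k
      simp [hDmixdef, j.isLt]
    rw [he]
    rfl
  have htel : ddetX f Df' F DF - ddetX f Df'' F DF
      = ∑ m ∈ Finset.range n,
          ((bigMat f (Dmix m) F DF).det - (bigMat f (Dmix (m + 1)) F DF).det) := by
    rw [Finset.sum_range_sub' (fun m => (bigMat f (Dmix m) F DF).det) n, hbig1, hbig2]
  -- per-column step
  have hstep : ∀ mf : Fin n,
      (bigMat f (Dmix (mf : ℕ)) F DF).det - (bigMat f (Dmix ((mf : ℕ) + 1)) F DF).det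
        = ∑ a : Fin (n + 1), ∑ b ∈ Finset.univ.filter (fun b => a < b),
            (phiX f F a * phiY f F b - phiX f F b * phiY f F a)
              * (∑ r : Fin n, ∑ l ∈ Finset.univ.filter (fun l => r < l),
                  cc mf r l * kDet f (Dmix (mf : ℕ)) F DF mf r l a b) := by
    intro mf
    apply step_m f F DF hDF (Dmix (mf : ℕ)) (Dmix ((mf : ℕ) + 1)) mf ?_
      (hDmixder (mf : ℕ)) (cc mf) (hanti mf) (hdiag mf) ?_
    · intro j hj
      funext k
      have hjv : (j : ℕ) ≠ (mf : ℕ) := fun hc => hj (Fin.ext hc)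
      by_cases h1 : (j : ℕ) < (mf : ℕ)
      · simp only [hDmixdef, if_pos h1, if_pos (Nat.lt_succ_of_lt h1)]
      · have h2 : ¬ (j : ℕ) < (mf : ℕ) + 1 := by omega
        simp only [hDmixdef, if_neg h1, if_neg h2]
    · intro k
      have e1 : Dmix (mf : ℕ) mf = Df' mf := by
        simp [hDmixdef]
      have e2 : Dmix ((mf : ℕ) + 1) mf = Df'' mf := by
        simp [hDmixdef]
      rw [e1, e2]
      exact hrep mf k
  -- total coefficient
  set W : Fin (n + 1) → Fin (n + 1) → MvPolynomial (Fin n ⊕ Fin n) R := fun a b =>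
    ∑ mf : Fin n, ∑ r : Fin n, ∑ l ∈ Finset.univ.filter (fun l => r < l),
      cc mf r l * kDet f (Dmix (mf : ℕ)) F DF mf r l a b with hWdef
  have hW : ∀ a b, W a b = ∑ mf : Fin n, ∑ r : Fin n,
      ∑ l ∈ Finset.univ.filter (fun l => r < l),
        cc mf r l * kDet f (Dmix (mf : ℕ)) F DF mf r l a b := fun _ _ => rfl
  have hsumform : ddetX f Df' F DF - ddetX f Df'' F DF
      = ∑ a : Fin (n + 1), ∑ b ∈ Finset.univ.filter (fun b => a < b),
          (phiX f F a * phiY f F b - phiX f F b * phiY f F a) * W a b := by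
    rw [htel, ← Fin.sum_univ_eq_sum_range
      (fun m => (bigMat f (Dmix m) F DF).det - (bigMat f (Dmix (m + 1)) F DF).det) n]
    rw [Finset.sum_congr rfl (fun mf _ => hstep mf)]
    rw [Finset.sum_comm]
    apply Finset.sum_congr rfl
    intro a _
    rw [Finset.sum_comm]
    apply Finset.sum_congr rfl
    intro b _
    rw [hW, Finset.mul_sum]
  -- entry bounds for the K determinants
  set Dcol : Fin (n + 1) → ℤ :=
    fun j => if hj : (j : ℕ) < n then df ⟨j, hj⟩ - 1 else d - 1 with hDcoldef
  have hDcolc : ∀ j : Fin n, Dcol j.castSucc = df j - 1 := by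
    intro j
    have hjn : ((j.castSucc : Fin (n + 1)) : ℕ) < n := by simpa using j.isLt
    simp only [hDcoldef]
    rw [dif_pos hjn]
    rfl
  have hDcoll : Dcol (Fin.last n) = d - 1 := by
    simp only [hDcoldef]
    rw [dif_neg (by simp)]
  have hDcolsum : ∑ j : Fin (n + 1), Dcol j = deltaF f + d - 1 := by
    rw [Fin.sum_univ_castSucc, Finset.sum_congr rfl (fun j _ => hDcolc j), hDcoll, deltaF]
    have : ∀ i : Fin n, df i - 1 = ((f i).totalDegree : ℤ) - 1 := fun i => rfl
    rw [Finset.sum_congr rfl (fun i _ => this i)]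
    ring
  have hentries : ∀ (mf : Fin n) (s j : Fin (n + 1)), s ≠ Fin.last n →
      mdeg (hatGamma f (Dmix (mf : ℕ)) F DF mf.castSucc s j)
        ≤ ((Dcol j : ℤ) : WithBot ℤ) := by
    intro mf s j hs
    have hsn : (s : ℕ) < n := by
      have h1 := s.isLt
      have h2 : (s : ℕ) ≠ n := fun hc => hs (Fin.ext (by simp [hc]))
      omega
    rcases eq_or_ne j mf.castSucc with rfl | hj
    · rw [hatGamma, Matrix.of_apply, if_pos rfl, mdeg_zero]
      exact bot_le
    · rw [hatGamma, Matrix.of_apply, if_neg hj]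
      rcases lt_or_ge (j : ℕ) n with hjn | hjn
      · simp only [bigMat, Matrix.of_apply, dif_pos hsn, dif_pos hjn]
        have hb : Dcol j = df ⟨j, hjn⟩ - 1 := by
          simp only [hDcoldef]
          rw [dif_pos hjn]
        rw [hb]
        by_cases h1 : ((j : ℕ) : ℕ) < (mf : ℕ)
        · simp only [hDmixdef, if_pos h1]
          exact hDf''deg _ _
        · simp only [hDmixdef, if_neg h1]
          exact hDf'deg _ _
      · simp only [bigMat, Matrix.of_apply, dif_pos hsn, dif_neg (not_lt.mpr hjn)]
        have hb : Dcol j = d - 1 := by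
          simp only [hDcoldef]
          rw [dif_neg (not_lt.mpr hjn)]
        rw [hb]
        exact hDFdeg _
  -- bound for W
  have hWbound : ∀ (a b : Fin (n + 1)), a ≠ b →
      mdeg (W a b) ≤ ((deltaF f + d - 2 - Dcol a - Dcol b : ℤ) : WithBot ℤ) := by
    intro a b hab
    rw [hW]
    apply mdeg_sum_le
    intro mf _
    apply mdeg_sum_le
    intro r _
    apply mdeg_sum_le
    intro l hl
    rw [Finset.mem_filter] at hl
    have hrl : r ≠ l := ne_of_lt hl.2
    rcases eq_or_ne mf.castSucc a with hma | hma
    · rw [← hma, kDet_zero_left f _ F DF mf hrl, mul_zero, mdeg_zero]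
      exact bot_le
    rcases eq_or_ne mf.castSucc b with hmb | hmb
    · rw [← hmb, kDet_zero_right f _ F DF mf hrl, mul_zero, mdeg_zero]
      exact bot_le
    refine le_trans (mdeg_mul_le _ _) ?_
    have h1 := hccdeg mf r l
    have h2 : mdeg (kDet f (Dmix (mf : ℕ)) F DF mf r l a b)
        ≤ (((∑ j ∈ ({mf.castSucc, a, b} : Finset (Fin (n + 1)))ᶜ, Dcol j) : ℤ)
            : WithBot ℤ) := by
      exact mdeg_det_three_single _ r.castSucc l.castSucc mf.castSucc a b Dcol
        (fun hc => hrl (Fin.castSucc_injective n hc))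
        (Fin.castSucc_lt_last r).ne (Fin.castSucc_lt_last l).ne hma hmb hab
        (fun s j _ _ h3 => hentries mf s j h3)
    refine le_trans (add_le_add h1 h2) ?_
    rw [← WithBot.coe_add, WithBot.coe_le_coe]
    have h3 := Finset.sum_compl_add_sum ({mf.castSucc, a, b} : Finset (Fin (n + 1))) Dcol
    have h4 : ∑ j ∈ ({mf.castSucc, a, b} : Finset (Fin (n + 1))), Dcol j
        = Dcol mf.castSucc + Dcol a + Dcol b := by
      rw [show ({mf.castSucc, a, b} : Finset (Fin (n + 1))) = insert mf.castSucc {a, b}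
        from rfl]
      rw [Finset.sum_insert (by simp [hma, hmb]), Finset.sum_pair hab]
      ring
    rw [hDcolsum] at h3
    rw [h4] at h3
    have h5 : Dcol mf.castSucc = df mf - 1 := hDcolc mf
    omega
  -- finish
  refine ⟨fun i j => W i.castSucc j.castSucc, fun i => W i.castSucc (Fin.last n),
    ?_, ?_, ?_⟩
  · -- degree bound for ω
    intro i j hij
    have hab : i.castSucc ≠ (j.castSucc : Fin (n + 1)) :=
      fun hc => (ne_of_lt hij) (Fin.castSucc_injective n hc)
    have hb := hWbound i.castSucc j.castSucc hab
    rw [hDcolc i, hDcolc j] at hb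
    rw [hmdegf i, hmdegf j]
    calc ((df i : ℤ) : WithBot ℤ) + ((df j : ℤ) : WithBot ℤ) + mdeg (W i.castSucc j.castSucc)
        ≤ ((df i : ℤ) : WithBot ℤ) + ((df j : ℤ) : WithBot ℤ)
          + ((deltaF f + d - 2 - (df i - 1) - (df j - 1) : ℤ) : WithBot ℤ) := by
          exact add_le_add le_rfl hb
      _ = ((deltaF f + d : ℤ) : WithBot ℤ) := by
          rw [← WithBot.coe_add, ← WithBot.coe_add, WithBot.coe_inj]
          ring
  · -- degree bound for Ω
    intro i
    have hab : i.castSucc ≠ Fin.last n := (Fin.castSucc_lt_last i).ne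
    have hb := hWbound i.castSucc (Fin.last n) hab
    rw [hDcolc i, hDcoll] at hb
    rw [hmdegf i]
    calc ((df i : ℤ) : WithBot ℤ) + mdeg (W i.castSucc (Fin.last n))
        ≤ ((df i : ℤ) : WithBot ℤ)
          + ((deltaF f + d - 2 - (df i - 1) - (d - 1) : ℤ) : WithBot ℤ) := by
          exact add_le_add le_rfl hb
      _ = ((deltaF f : ℤ) : WithBot ℤ) := by
          rw [← WithBot.coe_add, WithBot.coe_inj]
          ring
  · -- the equation
    rw [hsumform]
    have hphiXc : ∀ i : Fin n, phiX f F i.castSucc = toX (f i) := by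
      intro i
      have hjn : ((i.castSucc : Fin (n + 1)) : ℕ) < n := by simpa using i.isLt
      simp only [phiX]
      rw [dif_pos hjn]
      rfl
    have hphiYc : ∀ i : Fin n, phiY f F i.castSucc = toY (f i) := by
      intro i
      have hjn : ((i.castSucc : Fin (n + 1)) : ℕ) < n := by simpa using i.isLt
      simp only [phiY]
      rw [dif_pos hjn]
      rfl
    have hphiXl : phiX f F (Fin.last n) = toX F := by
      simp only [phiX]
      rw [dif_neg (by simp)]
    have hphiYl : phiY f F (Fin.last n) = toY F := by
      simp only [phiY]
      rw [dif_neg (by simp)]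
    rw [Fin.sum_univ_castSucc (f := fun a => ∑ b ∈ Finset.univ.filter (fun b => a < b),
      (phiX f F a * phiY f F b - phiX f F b * phiY f F a) * W a b)]
    have hlast0 : ∑ b ∈ Finset.univ.filter (fun b => Fin.last n < b),
        (phiX f F (Fin.last n) * phiY f F b - phiX f F b * phiY f F (Fin.last n))
          * W (Fin.last n) b = 0 := by
      have he : Finset.univ.filter (fun b : Fin (n + 1) => Fin.last n < b) = ∅ := by
        apply Finset.eq_empty_of_forall_notMem
        intro b hb
        rw [Finset.mem_filter] at hb
        exact absurd hb.2 (not_lt.mpr (Fin.le_last b))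
      rw [he, Finset.sum_empty]
    rw [hlast0, add_zero]
    have hinner : ∀ i : Fin n,
        ∑ b ∈ Finset.univ.filter (fun b => i.castSucc < b),
          (phiX f F i.castSucc * phiY f F b - phiX f F b * phiY f F i.castSucc)
            * W i.castSucc b
        = (∑ j ∈ Finset.univ.filter (fun j => i < j),
            (toX (f i) * toY (f j) - toY (f i) * toX (f j)) * W i.castSucc j.castSucc)
          + (toX (f i) * toY F - toY (f i) * toX F) * W i.castSucc (Fin.last n) := by
      intro i
      rw [Finset.sum_filter]
      rw [Fin.sum_univ_castSucc (f := fun b => if i.castSucc < b then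
        (phiX f F i.castSucc * phiY f F b - phiX f F b * phiY f F i.castSucc)
          * W i.castSucc b else 0)]
      congr 1
      · rw [Finset.sum_filter]
        apply Finset.sum_congr rfl
        intro j _
        by_cases hij : i < j
        · rw [if_pos (by exact Fin.castSucc_lt_castSucc_iff.mpr hij), if_pos hij]
          rw [hphiXc i, hphiXc j, hphiYc i, hphiYc j]
          ring
        · rw [if_neg (fun hc => hij (Fin.castSucc_lt_castSucc_iff.mp hc)), if_neg hij]
      · rw [if_pos (Fin.castSucc_lt_last i)]
        rw [hphiXc i, hphiXl, hphiYc i, hphiYl]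
        ring
    rw [Finset.sum_congr rfl (fun i _ => hinner i), Finset.sum_add_distrib]

end
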